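/- The root lattice E₈ ⊂ ℝ⁸ is cyclic but not simple cyclic: ρ(E₈) = E₈, yet there is no vector c ∈ E₈ such that E₈ = span_ℤ{c, ρ(c), …, ρ⁷(c)}. -/
import Mathlib

noncomputable section

/-- The rotation shift operator on `ℝ⁸`: `ρ(c₁, …, c₈) = (c₈, c₁, …, c₇)`. -/
def rotShiftR (c : Fin 8 → ℝ) : Fin 8 → ℝ :=
  fun i => c ((finRotate 8).symm i)

/-- The root lattice `E₈`: vectors in `ℝ⁸` whose coordinates are all integers or all
half-odd-integers, with coordinate sum in `2ℤ`. -/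
def rootE8 : Set (Fin 8 → ℝ) :=
  {x | ((∀ i, ∃ k : ℤ, x i = (k : ℝ)) ∨ (∀ i, ∃ k : ℤ, x i = (k : ℝ) + 1 / 2)) ∧
    ∃ m : ℤ, ∑ i, x i = 2 * (m : ℝ)}

lemma sum_rotShiftR (c : Fin 8 → ℝ) : ∑ i, rotShiftR c i = ∑ i, c i :=
  Equiv.sum_comp (finRotate 8).symm c

lemma sum_rotShiftR_iter (c : Fin 8 → ℝ) (k : ℕ) :
    ∑ i, (rotShiftR^[k] c) i = ∑ i, c i := by
  induction k with
  | zero => simp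
  | succ n ih => rw [Function.iterate_succ_apply', sum_rotShiftR, ih]

lemma iter_coord (c : Fin 8 → ℝ) (k : ℕ) (i : Fin 8) :
    ∃ j, (rotShiftR^[k] c) i = c j := by
  induction k generalizing i with
  | zero => exact ⟨i, rfl⟩
  | succ n ih =>
    rw [Function.iterate_succ_apply']
    exact ih _

/-- The root lattice `E₈` is cyclic but not simple cyclic. -/
theorem rootE8_cyclic_not_simpleCyclic :
    rotShiftR '' rootE8 = rootE8 ∧
    ¬ ∃ c ∈ rootE8,
        (Submodule.span ℤ (Set.range fun k : Fin 8 => rotShiftR^[k] c) :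
          Set (Fin 8 → ℝ)) = rootE8 := by
  constructor
  · ext x
    constructor
    · rintro ⟨y, ⟨hy1, m, hy2⟩, rfl⟩
      refine ⟨?_, m, by rw [sum_rotShiftR]; exact hy2⟩
      rcases hy1 with h | h
      · exact Or.inl fun i => h _
      · exact Or.inr fun i => h _
    · rintro ⟨hx1, m, hx2⟩
      refine ⟨fun i => x (finRotate 8 i), ⟨?_, m, ?_⟩, ?_⟩
      · rcases hx1 with h | h
        · exact Or.inl fun i => h _
        · exact Or.inr fun i => h _
      · rw [Equiv.sum_comp (finRotate 8) x]; exact hx2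
      · funext i
        simp [rotShiftR]
  · rintro ⟨c, ⟨hc1, mc, hc2⟩, hspan⟩
    rcases hc1 with hint | hhalf
    · -- span is all-integer, but (1/2,…,1/2) ∈ E₈
      have hmem : (fun _ : Fin 8 => (1/2 : ℝ)) ∈ rootE8 := by
        refine ⟨Or.inr fun i => ⟨0, by norm_num⟩, 2, ?_⟩
        simp [Finset.sum_const]
        norm_num
      rw [← hspan] at hmem
      rw [SetLike.mem_coe, Submodule.mem_span_range_iff_exists_fun] at hmem
      obtain ⟨a, ha⟩ := hmem
      have h0 := congrFun ha 0
      simp only [Finset.sum_apply, Pi.smul_apply, zsmul_eq_mul, Pi.mul_apply, Pi.intCast_apply] at h0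
      -- each coordinate of the iterate is an integer
      have : ∀ k : Fin 8, ∃ n : ℤ, (rotShiftR^[(k:ℕ)] c) 0 = (n : ℝ) := by
        intro k
        obtain ⟨j, hj⟩ := iter_coord c (k:ℕ) 0
        obtain ⟨n, hn⟩ := hint j
        exact ⟨n, by rw [hj, hn]⟩
      choose n hn using this
      have h0' : ((∑ k : Fin 8, a k * n k : ℤ) : ℝ) = 1/2 := by
        push_cast
        calc (∑ k : Fin 8, (a k : ℝ) * (n k : ℝ))
            = ∑ k : Fin 8, (a k : ℝ) * ((rotShiftR^[(k:ℕ)] c) 0) :=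
              Finset.sum_congr rfl fun k _ => by rw [hn k]
          _ = 1/2 := h0
      have : (2 * ∑ k : Fin 8, a k * n k : ℤ) = 1 := by
        have := congrArg (fun r : ℝ => 2 * r) h0'
        norm_num at this
        exact_mod_cast this
      omega
    · -- c is half-integer type; use (2,0,…,0) ∈ E₈
      have hmem : (fun i : Fin 8 => if i = 0 then (2:ℝ) else 0) ∈ rootE8 := by
        refine ⟨Or.inl fun i => ?_, 1, ?_⟩
        · by_cases h : i = 0
          · exact ⟨2, by simp [h]⟩
          · exact ⟨0, by simp [h]⟩
        · simp
      rw [← hspan] at hmem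
      rw [SetLike.mem_coe, Submodule.mem_span_range_iff_exists_fun] at hmem
      obtain ⟨a, ha⟩ := hmem
      choose m hm using hhalf
      -- coordinate 0 gives: ∑ a k * (m jₖ + 1/2) = 2, so A := ∑ a k is even
      have h0 := congrFun ha 0
      simp only [Finset.sum_apply, Pi.smul_apply, zsmul_eq_mul, Pi.mul_apply, Pi.intCast_apply, if_pos rfl, if_true] at h0
      have hcoord : ∀ k : Fin 8, ∃ n : ℤ, (rotShiftR^[(k:ℕ)] c) 0 = (n : ℝ) + 1/2 := by
        intro k
        obtain ⟨j, hj⟩ := iter_coord c (k:ℕ) 0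
        exact ⟨m j, by rw [hj, hm j]⟩
      choose n hn using hcoord
      have h0' : (∑ k : Fin 8, ((a k : ℝ) * ((n k : ℝ) + 1/2))) = 2 := by
        calc (∑ k : Fin 8, ((a k : ℝ) * ((n k : ℝ) + 1/2)))
            = ∑ k : Fin 8, (a k : ℝ) * ((rotShiftR^[(k:ℕ)] c) 0) :=
              Finset.sum_congr rfl fun k _ => by rw [hn k]
          _ = 2 := h0
      have hA : (∑ k : Fin 8, a k * (2 * n k + 1) : ℤ) = 4 := by
        have := congrArg (fun r : ℝ => 2 * r) h0'
        simp only [Finset.mul_sum] at this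
        norm_num at this
        have : ((∑ k : Fin 8, a k * (2 * n k + 1) : ℤ) : ℝ) = 4 := by
          push_cast
          rw [← this]
          exact Finset.sum_congr rfl fun k _ => by ring
        exact_mod_cast this
      have hAeven : Even (∑ k : Fin 8, a k) := by
        have : (∑ k : Fin 8, a k) = 4 - 2 * ∑ k : Fin 8, a k * n k := by
          rw [← hA, Finset.mul_sum, ← Finset.sum_sub_distrib]
          exact Finset.sum_congr rfl fun k _ => by ring
        rw [this]
        exact ⟨2 - ∑ k : Fin 8, a k * n k, by ring⟩
      -- total sum gives: A * (2 mc) = 2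
      have hsum := congrArg (fun x : Fin 8 → ℝ => ∑ i, x i) ha
      simp only [Finset.sum_apply, Pi.smul_apply, zsmul_eq_mul, Pi.mul_apply, Pi.intCast_apply] at hsum
      rw [Finset.sum_comm] at hsum
      have hRHS : ∑ i : Fin 8, (if i = 0 then (2:ℝ) else 0) = 2 := by simp
      have hL : ∑ k : Fin 8, ∑ i : Fin 8, (a k : ℝ) * (rotShiftR^[(k:ℕ)] c i)
          = (∑ k : Fin 8, (a k : ℝ)) * (2 * (mc : ℝ)) := by
        rw [Finset.sum_mul]
        refine Finset.sum_congr rfl fun k _ => ?_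
        rw [← Finset.mul_sum, sum_rotShiftR_iter, hc2]
      rw [hL, hRHS] at hsum
      have hkey : (∑ k : Fin 8, a k) * mc = 1 := by
        have h2 : (((∑ k : Fin 8, a k) * mc : ℤ) : ℝ) = 1 := by
          push_cast
          linear_combination hsum / 2
        exact_mod_cast h2
      have : Even ((∑ k : Fin 8, a k) * mc) := hAeven.mul_right mc
      rw [hkey] at this
      simp at this

end
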